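/- arXiv:1406.3281 — 9 statements merged into one kernel-verified Lean document; each statement's English description precedes it below -/
import Mathlib

section
/- Let Ξ be a finite set and μ : Set Ξ → ℝ satisfy the Sorkin sum rule. Let Q be a finite partition of a set X ⊆ Ξ into pairwise disjoint nonempty blocks. If μ(A) + μ(B) = μ(A ∪ B) for all distinct blocks A, B ∈ Q, then μ(X) = ∑_{A ∈ Q} μ(A). -/
/-- The Sorkin sum rule (vanishing third-order interference). -/
def SorkinRule {Ξ : Type*} (μ : Set Ξ → ℝ) : Prop :=
  ∀ A B C : Set Ξ, Disjoint A B → Disjoint B C → Disjoint A C →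
    μ A + μ B + μ C - μ (A ∪ B) - μ (B ∪ C) - μ (C ∪ A) + μ (A ∪ B ∪ C) = 0

lemma sorkin_mu_empty {Ξ : Type*} (μ : Set Ξ → ℝ) (hμ : SorkinRule μ) : μ ∅ = 0 := by
  have h := hμ ∅ ∅ ∅ (by simp) (by simp) (by simp)
  simpa using h

lemma sorkin_add_union {Ξ : Type*} (μ : Set Ξ → ℝ) (hμ : SorkinRule μ) :
    ∀ s : Finset (Set Ξ),
      (∀ A ∈ s, ∀ B ∈ s, A ≠ B → Disjoint A B) →
      (∀ A ∈ s, ∀ B ∈ s, A ≠ B → μ A + μ B = μ (A ∪ B)) →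
      ∀ B : Set Ξ, (∀ A ∈ s, Disjoint B A) → (∀ A ∈ s, μ B + μ A = μ (B ∪ A)) →
      μ (B ∪ ⋃₀ ↑s) = μ B + μ (⋃₀ ↑s) := by
  intro s
  classical
  induction s using Finset.induction_on with
  | empty => intro _ _ B _ _; simp [sorkin_mu_empty μ hμ]
  | @insert C t hC ih =>
    intro hdis hadd B hBdis hBadd
    set T : Set Ξ := ⋃₀ ↑t with hT
    have hmemC : C ∈ insert C t := Finset.mem_insert_self C t
    have hdis' : ∀ A ∈ t, ∀ B ∈ t, A ≠ B → Disjoint A B := fun A hA B hB h =>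
      hdis A (Finset.mem_insert_of_mem hA) B (Finset.mem_insert_of_mem hB) h
    have hadd' : ∀ A ∈ t, ∀ B ∈ t, A ≠ B → μ A + μ B = μ (A ∪ B) := fun A hA B hB h =>
      hadd A (Finset.mem_insert_of_mem hA) B (Finset.mem_insert_of_mem hB) h
    have hCdis : ∀ A ∈ t, Disjoint C A := fun A hA =>
      hdis C hmemC A (Finset.mem_insert_of_mem hA) (by rintro rfl; exact hC hA)
    have hCadd : ∀ A ∈ t, μ C + μ A = μ (C ∪ A) := fun A hA =>
      hadd C hmemC A (Finset.mem_insert_of_mem hA) (by rintro rfl; exact hC hA)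
    have hIHC : μ (C ∪ T) = μ C + μ T := ih hdis' hadd' C hCdis hCadd
    have hIHB : μ (B ∪ T) = μ B + μ T :=
      ih hdis' hadd' B (fun A hA => hBdis A (Finset.mem_insert_of_mem hA))
        (fun A hA => hBadd A (Finset.mem_insert_of_mem hA))
    have hBC : μ B + μ C = μ (B ∪ C) := hBadd C hmemC
    have dBC : Disjoint B C := hBdis C hmemC
    have dCT : Disjoint C T := by
      rw [hT, Set.disjoint_sUnion_right]; exact fun A hA => hCdis A hA
    have dBT : Disjoint B T := by
      rw [hT, Set.disjoint_sUnion_right]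
      exact fun A hA => hBdis A (Finset.mem_insert_of_mem hA)
    have h := hμ B C T dBC dCT dBT
    have hcomm : μ (T ∪ B) = μ (B ∪ T) := by rw [Set.union_comm]
    have hgoal : μ (B ∪ (C ∪ T)) = μ B + μ (C ∪ T) := by
      rw [← Set.union_assoc]; linarith
    simpa [Set.sUnion_insert] using hgoal

/-- Lemma 1: pairwise non-interference implies joint non-interference. -/
theorem pairwise_noninterference_implies_joint {Ξ : Type*} [Fintype Ξ]
    (μ : Set Ξ → ℝ) (hμ : SorkinRule μ) (X : Set Ξ) (Q : Finset (Set Ξ))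
    (hne : ∀ A ∈ Q, A ≠ (∅ : Set Ξ))
    (hdisj : ∀ A ∈ Q, ∀ B ∈ Q, A ≠ B → Disjoint A B)
    (hcover : ⋃₀ (↑Q : Set (Set Ξ)) = X)
    (hpair : ∀ A ∈ Q, ∀ B ∈ Q, A ≠ B → μ A + μ B = μ (A ∪ B)) :
    μ X = ∑ A ∈ Q, μ A := by
  subst hcover
  clear hne
  classical
  induction Q using Finset.induction_on with
  | empty => simp [sorkin_mu_empty μ hμ]
  | @insert A s hA ih =>
    have hmemA : A ∈ insert A s := Finset.mem_insert_self A s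
    have hdis' : ∀ C ∈ s, ∀ B ∈ s, C ≠ B → Disjoint C B := fun C hC B hB h =>
      hdisj C (Finset.mem_insert_of_mem hC) B (Finset.mem_insert_of_mem hB) h
    have hadd' : ∀ C ∈ s, ∀ B ∈ s, C ≠ B → μ C + μ B = μ (C ∪ B) := fun C hC B hB h =>
      hpair C (Finset.mem_insert_of_mem hC) B (Finset.mem_insert_of_mem hB) h
    have key : μ (A ∪ ⋃₀ ↑s) = μ A + μ (⋃₀ ↑s) :=
      sorkin_add_union μ hμ s hdis' hadd' A
        (fun B hB => hdisj A hmemA B (Finset.mem_insert_of_mem hB) (by rintro rfl; exact hA hB))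
        (fun B hB => hpair A hmemA B (Finset.mem_insert_of_mem hB) (by rintro rfl; exact hA hB))
    rw [show (↑(insert A s) : Set (Set Ξ)) = insert A ↑s by simp, Set.sUnion_insert, key,
      Finset.sum_insert hA, ih hdis' hadd']
end

section
/- Let Ξ be a finite set and μ : Set Ξ → ℝ satisfy the Sorkin sum rule. Then the fourth-order interference also vanishes: for any four pairwise disjoint subsets A₁, A₂, A₃, A₄ of Ξ, I₄(A₁,A₂,A₃,A₄) := μ(A₁∪A₂∪A₃∪A₄) − ∑_{|S|=3} μ(∪_{i∈S}A_i) + ∑_{|S|=2} μ(∪_{i∈S}A_i) − ∑_{i} μ(A_i) = 0. -/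
/-- The Sorkin sum rule implies vanishing fourth-order interference. -/
theorem fourth_order_vanishes {Ξ : Type*} [Fintype Ξ] (μ : Set Ξ → ℝ)
    (hμ : SorkinRule μ) (A₁ A₂ A₃ A₄ : Set Ξ)
    (h12 : Disjoint A₁ A₂) (h13 : Disjoint A₁ A₃) (h14 : Disjoint A₁ A₄)
    (h23 : Disjoint A₂ A₃) (h24 : Disjoint A₂ A₄) (h34 : Disjoint A₃ A₄) :
    μ (A₁ ∪ A₂ ∪ A₃ ∪ A₄)
      - (μ (A₁ ∪ A₂ ∪ A₃) + μ (A₁ ∪ A₂ ∪ A₄) + μ (A₁ ∪ A₃ ∪ A₄) + μ (A₂ ∪ A₃ ∪ A₄))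
      + (μ (A₁ ∪ A₂) + μ (A₁ ∪ A₃) + μ (A₁ ∪ A₄) + μ (A₂ ∪ A₃) + μ (A₂ ∪ A₄) + μ (A₃ ∪ A₄))
      - (μ A₁ + μ A₂ + μ A₃ + μ A₄) = 0 := by
  have h1 := hμ A₁ A₂ (A₃ ∪ A₄) h12 (Disjoint.union_right h23 h24) (Disjoint.union_right h13 h14)
  have h2 := hμ A₃ A₄ A₁ h34 h14.symm h13.symm
  have h3 := hμ A₃ A₄ A₂ h34 h24.symm h23.symm
  have h4 := hμ A₃ A₄ (A₁ ∪ A₂) h34 (Disjoint.union_right h14.symm h24.symm) (Disjoint.union_right h13.symm h23.symm)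
  simp only [Set.union_assoc, Set.union_comm, Set.union_left_comm] at *
  linarith
end

section
/- Let Ξ be a finite set, μ : Set Ξ → ℝ≥0 a nonnegative function satisfying the Sorkin sum rule with μ(Ξ) = 1, and suppose μ(Bᶜ) + μ(B) = 1 for every B in a family S of pairwise disjoint subsets of Ξ with μ(A) + μ(B) = μ(A ∪ B) for all distinct A, B ∈ S. Then ∑_{A ∈ S} μ(A) ≤ 1. -/
/-- Quantitative core of the main theorem: exclusivity bound for a
nonnegative quantum measure. -/
theorem sum_le_one_of_pairwise_additive {Ξ : Type*} [Fintype Ξ]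
    (μ : Set Ξ → ℝ) (hnn : ∀ A : Set Ξ, 0 ≤ μ A) (hμ : SorkinRule μ)
    (huniv : μ Set.univ = 1) (S : Finset (Set Ξ))
    (hdisj : ∀ A ∈ S, ∀ B ∈ S, A ≠ B → Disjoint A B)
    (hcompl : ∀ B ∈ S, μ Bᶜ + μ B = 1)
    (hpair : ∀ A ∈ S, ∀ B ∈ S, A ≠ B → μ A + μ B = μ (A ∪ B)) :
    ∑ A ∈ S, μ A ≤ 1 := by
  classical
  have hempty : μ ∅ = 0 := by
    have := hμ ∅ ∅ ∅ disjoint_bot_left disjoint_bot_left disjoint_bot_left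
    simp at this
    linarith
  -- disjointness of sup of a subfamily with an outside member
  have hdisjU : ∀ T ⊆ S, ∀ B ∈ S, B ∉ T → Disjoint (T.sup id) B := by
    intro T hT B hB hBT
    rw [Finset.disjoint_sup_left]
    intro A hA
    exact hdisj A (hT hA) B hB (fun h => hBT (h ▸ hA))
  suffices h : ∀ T ⊆ S,
      (μ (T.sup id) = ∑ A ∈ T, μ A) ∧
      (μ (T.sup id)ᶜ = 1 - ∑ A ∈ T, μ A) ∧
      (∀ B ∈ S, B ∉ T → μ (T.sup id ∪ B) = (∑ A ∈ T, μ A) + μ B) by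
    obtain ⟨_, h2, _⟩ := h S le_rfl
    have := hnn (S.sup id)ᶜ
    linarith
  intro T
  induction T using Finset.induction with
  | empty =>
    intro _
    refine ⟨by simpa using hempty, by simpa using huniv, ?_⟩
    intro B _ _
    simp
  | @insert A T hA ih =>
    intro hsub
    have hAS : A ∈ S := hsub (Finset.mem_insert_self A T)
    have hTS : T ⊆ S := fun x hx => hsub (Finset.mem_insert_of_mem hx)
    obtain ⟨ih1, ih2, ih3⟩ := ih hTS
    set U : Set Ξ := T.sup id with hU
    have hsupins : (insert A T).sup id = A ∪ U := by
      rw [Finset.sup_insert]; rfl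
    have hUA : Disjoint U A := hdisjU T hTS A hAS hA
    have hadd : μ (U ∪ A) = (∑ x ∈ T, μ x) + μ A := ih3 A hAS hA
    have hsum : μ ((insert A T).sup id) = ∑ x ∈ insert A T, μ x := by
      rw [hsupins, Finset.sum_insert hA, Set.union_comm, hadd]; ring
    refine ⟨hsum, ?_, ?_⟩
    · -- complement identity
      set W : Set Ξ := (U ∪ A)ᶜ with hW
      have d1 : Disjoint U A := hUA
      have d2 : Disjoint A W := Set.disjoint_compl_right_iff_subset.mpr Set.subset_union_right
      have d3 : Disjoint U W := Set.disjoint_compl_right_iff_subset.mpr Set.subset_union_left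
      have key := hμ U A W d1 d2 d3
      have e1 : A ∪ W = Uᶜ := by
        ext x
        simp only [hW, Set.mem_union, Set.mem_compl_iff]
        constructor
        · rintro (hx | hx)
          · exact fun hxU => Set.disjoint_left.mp hUA hxU hx
          · exact fun hxU => hx (Or.inl hxU)
        · intro hx
          by_cases hxA : x ∈ A
          · exact Or.inl hxA
          · exact Or.inr (fun h => h.elim hx hxA)
      have e2 : W ∪ U = Aᶜ := by
        ext x
        simp only [hW, Set.mem_union, Set.mem_compl_iff]
        constructor
        · rintro (hx | hx)
          · exact fun hxA => hx (Or.inr hxA)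
          · exact fun hxA => Set.disjoint_left.mp hUA hx hxA
        · intro hx
          by_cases hxU : x ∈ U
          · exact Or.inr hxU
          · exact Or.inl (fun h => h.elim hxU hx)
      have e3 : U ∪ A ∪ W = Set.univ := Set.union_compl_self (U ∪ A)
      rw [e1, e2, e3, huniv] at key
      have hcA := hcompl A hAS
      have hWval : μ W = 1 - ((∑ x ∈ T, μ x) + μ A) := by
        rw [ih1] at key
        rw [hadd] at key
        rw [ih2] at key
        linarith
      have : ((insert A T).sup id)ᶜ = W := by
        rw [hsupins, hW, Set.union_comm]
      rw [this, hWval, Finset.sum_insert hA]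
      ring
    · -- additivity with a further outside member
      intro B hBS hBins
      have hBT : B ∉ T := fun h => hBins (Finset.mem_insert_of_mem h)
      have hBA : B ≠ A := fun h => hBins (h ▸ Finset.mem_insert_self A T)
      have dUA : Disjoint U A := hUA
      have dAB : Disjoint A B := hdisj A hAS B hBS (Ne.symm hBA)
      have dUB : Disjoint U B := hdisjU T hTS B hBS hBT
      have key := hμ U A B dUA dAB dUB
      rw [ih1, hadd, Set.union_comm B U, ih3 B hBS hBT,
        ← hpair A hAS B hBS (Ne.symm hBA)] at key
      have eset : (insert A T).sup id ∪ B = U ∪ A ∪ B := by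
        rw [hsupins, Set.union_comm A U]
      rw [eset, Finset.sum_insert hA]
      linarith
end

section
/- Let S = (Ξ, 𝓜) be a partition scenario and P a probability function on S. If P admits a joint quantum measure, then P obeys Consistent Exclusivity: for every set S₀ of fine-grained outcomes such that every pair of distinct outcomes in S₀ is exclusive, ∑_{A ∈ S₀} P(A) ≤ 1. -/
/-- A fine-grained outcome: a block of some measurement. -/
def IsOutcome {Ξ : Type*} (meas : Set (Finset (Set Ξ))) (A : Set Ξ) : Prop :=
  ∃ M ∈ meas, A ∈ M

/-- A coarse-grained outcome: a union of blocks of a single measurement. -/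
def IsCoarse {Ξ : Type*} (meas : Set (Finset (Set Ξ))) (C : Set Ξ) : Prop :=
  ∃ M ∈ meas, ∃ Q : Finset (Set Ξ), Q ⊆ M ∧ C = ⋃₀ (↑Q : Set (Set Ξ))

/-- Two outcomes are exclusive if they are disjoint and both blocks of a
common measurement. -/
def Exclusive {Ξ : Type*} (meas : Set (Finset (Set Ξ))) (A B : Set Ξ) : Prop :=
  Disjoint A B ∧ ∃ M ∈ meas, A ∈ M ∧ B ∈ M

/-- A probability function: a probability measure on each measurement's
Boolean algebra of coarse-grained outcomes. -/
def IsProbFun {Ξ : Type*} (meas : Set (Finset (Set Ξ))) (P : Set Ξ → ℝ) : Prop :=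
  (∀ C, IsCoarse meas C → 0 ≤ P C ∧ P C ≤ 1) ∧
  P Set.univ = 1 ∧
  ∀ M ∈ meas, ∀ Q : Finset (Set Ξ), Q ⊆ M →
    P (⋃₀ (↑Q : Set (Set Ξ))) = ∑ A ∈ Q, P A

/-- A joint quantum measure for `P`: nonnegative, agrees with `P` on all
coarse-grained outcomes, and satisfies the Sorkin sum rule. -/
def IsJQM {Ξ : Type*} (meas : Set (Finset (Set Ξ))) (P μ : Set Ξ → ℝ) : Prop :=
  (∀ A : Set Ξ, 0 ≤ μ A) ∧ (∀ C, IsCoarse meas C → μ C = P C) ∧ SorkinRule μ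

/-- Pairwise interference term. -/
def I2 {Ξ : Type*} (μ : Set Ξ → ℝ) (A B : Set Ξ) : ℝ :=
  μ (A ∪ B) - μ A - μ B

lemma I2_biadd {Ξ : Type*} {μ : Set Ξ → ℝ} (hs : SorkinRule μ)
    {A B C : Set Ξ} (hAB : Disjoint A B) (hAC : Disjoint A C) (hBC : Disjoint B C) :
    I2 μ A (B ∪ C) = I2 μ A B + I2 μ A C := by
  have h := hs A B C hAB hBC hAC
  simp only [I2]
  rw [Set.union_comm C A] at h
  rw [← Set.union_assoc]
  linarith

lemma I2_sum {Ξ : Type*} {μ : Set Ξ → ℝ} (hs : SorkinRule μ) (h0 : μ ∅ = 0)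
    (A : Set Ξ) (T : Finset (Set Ξ))
    (hA : ∀ B ∈ T, Disjoint A B)
    (hT : ∀ B ∈ T, ∀ C ∈ T, B ≠ C → Disjoint B C) :
    I2 μ A (⋃₀ (↑T : Set (Set Ξ))) = ∑ B ∈ T, I2 μ A B := by
  classical
  induction T using Finset.induction_on with
  | empty => simp [I2, h0]
  | @insert B T hB ih =>
    have hUT : ⋃₀ (↑(insert B T) : Set (Set Ξ)) = B ∪ ⋃₀ (↑T : Set (Set Ξ)) := by
      simp [Set.sUnion_insert]
    have hAB : Disjoint A B := hA B (Finset.mem_insert_self _ _)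
    have hAU : Disjoint A (⋃₀ (↑T : Set (Set Ξ))) := by
      rw [Set.disjoint_sUnion_right]
      exact fun C hC => hA C (Finset.mem_insert_of_mem (by exact_mod_cast hC))
    have hBU : Disjoint B (⋃₀ (↑T : Set (Set Ξ))) := by
      rw [Set.disjoint_sUnion_right]
      intro C hC
      have hC' : C ∈ T := by exact_mod_cast hC
      exact hT B (Finset.mem_insert_self _ _) C (Finset.mem_insert_of_mem hC')
        (fun h => hB (h ▸ hC'))
    rw [hUT, I2_biadd hs hAB hAU hBU, Finset.sum_insert hB,
      ih (fun C hC => hA C (Finset.mem_insert_of_mem hC))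
        (fun C hC D hD h => hT C (Finset.mem_insert_of_mem hC) D
          (Finset.mem_insert_of_mem hD) h)]

lemma mu_sUnion {Ξ : Type*} {μ : Set Ξ → ℝ} (hs : SorkinRule μ) (h0 : μ ∅ = 0)
    (T : Finset (Set Ξ))
    (hT : ∀ B ∈ T, ∀ C ∈ T, B ≠ C → Disjoint B C)
    (hI : ∀ B ∈ T, ∀ C ∈ T, B ≠ C → I2 μ B C = 0) :
    μ (⋃₀ (↑T : Set (Set Ξ))) = ∑ B ∈ T, μ B := by
  classical
  induction T using Finset.induction_on with
  | empty => simp [h0]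
  | @insert B T hB ih =>
    have hsub : ∀ C ∈ T, C ∈ insert B T := fun C hC => Finset.mem_insert_of_mem hC
    have hI2 : I2 μ B (⋃₀ (↑T : Set (Set Ξ))) = ∑ C ∈ T, I2 μ B C :=
      I2_sum hs h0 B T
        (fun C hC => hT B (Finset.mem_insert_self _ _) C (hsub C hC)
          (fun h => hB (h ▸ hC)))
        (fun C hC D hD h => hT C (hsub C hC) D (hsub D hD) h)
    have hz : ∑ C ∈ T, I2 μ B C = 0 := by
      apply Finset.sum_eq_zero
      intro C hC
      exact hI B (Finset.mem_insert_self _ _) C (hsub C hC) (fun h => hB (h ▸ hC))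
    have : ⋃₀ (↑(insert B T) : Set (Set Ξ)) = B ∪ ⋃₀ (↑T : Set (Set Ξ)) := by
      simp [Set.sUnion_insert]
    rw [this, Finset.sum_insert hB,
      ← ih (fun C hC D hD h => hT C (hsub C hC) D (hsub D hD) h)
        (fun C hC D hD h => hI C (hsub C hC) D (hsub D hD) h)]
    have := hI2
    rw [hz] at this
    simp only [I2] at this
    linarith

/-- Main theorem: a probability function admitting a joint quantum measure
obeys Consistent Exclusivity. -/
theorem jqm_implies_CE {Ξ : Type*} [Fintype Ξ]
    (meas : Set (Finset (Set Ξ)))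
    (hpart : ∀ M ∈ meas, Setoid.IsPartition (↑M : Set (Set Ξ)))
    (P : Set Ξ → ℝ) (hP : IsProbFun meas P)
    (hq : ∃ μ : Set Ξ → ℝ, IsJQM meas P μ)
    (S₀ : Finset (Set Ξ)) (hout : ∀ A ∈ S₀, IsOutcome meas A)
    (hex : ∀ A ∈ S₀, ∀ B ∈ S₀, A ≠ B → Exclusive meas A B) :
    ∑ A ∈ S₀, P A ≤ 1 := by
  classical
  obtain ⟨μ, hμ0, hμP, hs⟩ := hq
  rcases S₀.eq_empty_or_nonempty with rfl | ⟨A₀, hA₀⟩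
  · simp
  obtain ⟨M₀, hM₀, _⟩ := hout A₀ hA₀
  -- μ on the empty set
  have hPempty : P ∅ = 0 := by
    have := hP.2.2 M₀ hM₀ ∅ (Finset.empty_subset _)
    simpa using this
  have h0 : μ ∅ = 0 := by
    have : IsCoarse meas ∅ := ⟨M₀, hM₀, ∅, Finset.empty_subset _, by simp⟩
    rw [hμP ∅ this, hPempty]
  -- μ agrees with P on fine-grained outcomes
  have hfine : ∀ A, IsOutcome meas A → μ A = P A := by
    rintro A ⟨M, hM, hAM⟩
    exact hμP A ⟨M, hM, {A}, by simpa using hAM, by simp⟩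
  -- interference vanishes on exclusive pairs
  have hexI : ∀ A ∈ S₀, ∀ B ∈ S₀, A ≠ B → I2 μ A B = 0 := by
    intro A hA B hB hAB
    obtain ⟨hdisj, M, hM, hAM, hBM⟩ := hex A hA B hB hAB
    have hQ : ({A, B} : Finset (Set Ξ)) ⊆ M := by
      intro x hx
      rcases Finset.mem_insert.mp hx with rfl | hx
      · exact hAM
      · rwa [Finset.mem_singleton.mp hx]
    have hUAB : (⋃₀ (↑({A, B} : Finset (Set Ξ)) : Set (Set Ξ))) = A ∪ B := by simp
    have hμAB : μ (A ∪ B) = P A + P B := by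
      have hc : IsCoarse meas (A ∪ B) := ⟨M, hM, {A, B}, hQ, hUAB.symm⟩
      rw [hμP _ hc, ← hUAB, hP.2.2 M hM _ hQ, Finset.sum_pair hAB]
    simp only [I2, hμAB, hfine A (hout A hA), hfine B (hout B hB)]
    ring
  have hdisjS : ∀ B ∈ S₀, ∀ C ∈ S₀, B ≠ C → Disjoint B C :=
    fun B hB C hC h => (hex B hB C hC h).1
  set U : Set Ξ := ⋃₀ (↑S₀ : Set (Set Ξ)) with hU
  set R : Set Ξ := Uᶜ with hR
  -- each A ∈ S₀ is a subset of U
  have hsubU : ∀ A ∈ S₀, A ⊆ U := fun A hA => Set.subset_sUnion_of_mem (by exact_mod_cast hA)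
  -- interference between each outcome and R vanishes
  have hIR : ∀ A ∈ S₀, I2 μ A R = 0 := by
    intro A hA
    obtain ⟨M, hM, hAM⟩ := hout A hA
    obtain ⟨hne, huniq⟩ := hpart M hM
    -- complement of A is the union of the other blocks of M
    have hcompl : Aᶜ = ⋃₀ (↑(M.erase A) : Set (Set Ξ)) := by
      ext x
      simp only [Set.mem_compl_iff, Set.mem_sUnion, Finset.coe_erase, Set.mem_diff,
        Finset.mem_coe, Set.mem_singleton_iff]
      constructor
      · intro hx
        obtain ⟨B, ⟨hBM, hxB⟩, _⟩ := huniq x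
        exact ⟨B, ⟨hBM, fun h => hx (h ▸ hxB)⟩, hxB⟩
      · rintro ⟨B, ⟨hBM, hBA⟩, hxB⟩ hxA
        obtain ⟨C, _, hCuniq⟩ := huniq x
        exact hBA ((hCuniq B ⟨hBM, hxB⟩).trans (hCuniq A ⟨hAM, hxA⟩).symm)
    -- μ and P on Aᶜ
    have hcoarse : IsCoarse meas Aᶜ := ⟨M, hM, M.erase A, Finset.erase_subset _ _, hcompl⟩
    have hunivM : ⋃₀ (↑M : Set (Set Ξ)) = Set.univ := (hpart M hM).sUnion_eq_univ
    have hPsum : P A + P Aᶜ = 1 := by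
      have h1 := hP.2.2 M hM M (le_refl _)
      have h2 := hP.2.2 M hM (M.erase A) (Finset.erase_subset _ _)
      rw [hunivM, hP.2.1] at h1
      rw [← hcompl] at h2
      rw [← Finset.add_sum_erase M P hAM, ← h2] at h1
      linarith
    -- I2 (A, Aᶜ) = 0
    have hμuniv : μ Set.univ = 1 := by
      have : IsCoarse meas Set.univ := ⟨M, hM, M, le_refl _, hunivM.symm⟩
      rw [hμP _ this, hP.2.1]
    have hIAc : I2 μ A Aᶜ = 0 := by
      simp only [I2, Set.union_compl_self, hμuniv, hfine A (hout A hA),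
        hμP Aᶜ hcoarse]
      linarith
    -- Aᶜ = (union of other outcomes in S₀) ∪ R
    set U' : Set Ξ := ⋃₀ (↑(S₀.erase A) : Set (Set Ξ)) with hU'
    have hAU' : Disjoint A U' := by
      rw [hU', Set.disjoint_sUnion_right]
      intro B hB
      have hB' : B ∈ S₀.erase A := by exact_mod_cast hB
      exact hdisjS A hA B (Finset.mem_of_mem_erase hB')
        (Ne.symm (Finset.ne_of_mem_erase hB'))
    have hsplit : Aᶜ = U' ∪ R := by
      ext x
      simp only [Set.mem_compl_iff, Set.mem_union]
      constructor
      · intro hx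
        by_cases hxU : x ∈ U
        · left
          obtain ⟨B, hB, hxB⟩ := hxU
          have hB' : B ∈ S₀ := by exact_mod_cast hB
          have hBA : B ≠ A := fun h => hx (h ▸ hxB)
          exact ⟨B, Finset.mem_erase.mpr ⟨hBA, hB'⟩, hxB⟩
        · right; exact hxU
      · rintro (hx | hx) hxA
        · exact Set.disjoint_left.mp hAU' hxA hx
        · exact hx (hsubU A hA hxA)
    have hAR : Disjoint A R := Set.disjoint_compl_right_iff_subset.mpr (hsubU A hA)
    have hU'R : Disjoint U' R := by
      have hU'U : U' ⊆ U := by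
        rw [hU', hU]
        apply Set.sUnion_subset_sUnion
        exact_mod_cast Finset.erase_subset _ _
      exact Set.disjoint_compl_right_iff_subset.mpr hU'U
    have hIU' : I2 μ A U' = 0 := by
      rw [hU', I2_sum hs h0 A (S₀.erase A)
        (fun B hB => hdisjS A hA B (Finset.mem_of_mem_erase hB)
          (Ne.symm (Finset.ne_of_mem_erase hB)))
        (fun B hB C hC h => hdisjS B (Finset.mem_of_mem_erase hB) C
          (Finset.mem_of_mem_erase hC) h)]
      apply Finset.sum_eq_zero
      intro B hB
      exact hexI A hA B (Finset.mem_of_mem_erase hB) (Ne.symm (Finset.ne_of_mem_erase hB))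
    have := I2_biadd hs hAU' hAR hU'R
    rw [← hsplit, hIAc, hIU'] at this
    linarith
  -- I2 (R, U) = 0
  have hRU : I2 μ R U = 0 := by
    have h := I2_sum hs h0 R S₀
      (fun B hB => (Set.disjoint_compl_right_iff_subset.mpr (hsubU B hB)).symm)
      hdisjS
    rw [← hU] at h
    rw [h]
    apply Finset.sum_eq_zero
    intro B hB
    have := hIR B hB
    simp only [I2, Set.union_comm R B] at *
    linarith
  -- μ U = ∑ P A
  have hμU : μ U = ∑ A ∈ S₀, P A := by
    rw [hU, mu_sUnion hs h0 S₀ hdisjS hexI]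
    exact Finset.sum_congr rfl fun A hA => hfine A (hout A hA)
  -- μ univ = 1
  have hμuniv : μ Set.univ = 1 := by
    have hunivM : ⋃₀ (↑M₀ : Set (Set Ξ)) = Set.univ := (hpart M₀ hM₀).sUnion_eq_univ
    have : IsCoarse meas Set.univ := ⟨M₀, hM₀, M₀, le_refl _, hunivM.symm⟩
    rw [hμP _ this, hP.2.1]
  have hRUuniv : R ∪ U = Set.univ := by rw [hR, Set.compl_union_self]
  have : μ Set.univ = μ R + μ U := by
    have := hRU
    simp only [I2, hRUuniv] at this
    linarith
  have hμR := hμ0 R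
  rw [hμuniv, hμU] at this
  linarith
end

section
/- Let S = (Ξ, 𝓜) be a partition scenario, P a probability function on S, and μ a joint quantum measure for P. Let S₀ be a family of pairwise exclusive fine-grained outcomes, X = ∪_{A ∈ S₀} A, and R = Ξ \ X. Then for every B ∈ S₀, μ(B) + μ(R) = μ(B ∪ R). -/
/-- Auxiliary: a set that is pair-additive with each member of a pairwise
disjoint family is additive with the union of the family. -/
theorem sorkin_union_additive {Ξ : Type*} (μ : Set Ξ → ℝ) (hS : SorkinRule μ)
    (h0 : μ ∅ = 0) (B : Set Ξ) (T : Finset (Set Ξ))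
    (hdB : ∀ A ∈ T, Disjoint B A)
    (hdT : ∀ A ∈ T, ∀ A' ∈ T, A ≠ A' → Disjoint A A')
    (hadd : ∀ A ∈ T, μ (B ∪ A) = μ B + μ A) :
    μ (B ∪ ⋃₀ (↑T : Set (Set Ξ))) = μ B + μ (⋃₀ (↑T : Set (Set Ξ))) := by
  classical
  induction T using Finset.induction_on with
  | empty => simp [h0]
  | @insert A T' hAT' ih =>
    have hZB : Disjoint B (⋃₀ (↑T' : Set (Set Ξ))) :=
      Set.disjoint_sUnion_right.2 fun b hb => hdB b (Finset.mem_insert_of_mem hb)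
    have hAZ : Disjoint A (⋃₀ (↑T' : Set (Set Ξ))) :=
      Set.disjoint_sUnion_right.2 fun b hb =>
        hdT A (Finset.mem_insert_self A T') b (Finset.mem_insert_of_mem hb)
          (fun h => hAT' (h ▸ hb))
    have hBA : Disjoint B A := hdB A (Finset.mem_insert_self A T')
    have ih' := ih (fun b hb => hdB b (Finset.mem_insert_of_mem hb))
      (fun b hb b' hb' h => hdT b (Finset.mem_insert_of_mem hb) b'
        (Finset.mem_insert_of_mem hb') h)
      (fun b hb => hadd b (Finset.mem_insert_of_mem hb))
    have hso := hS B A (⋃₀ (↑T' : Set (Set Ξ))) hBA hAZ hZB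
    have hBA' := hadd A (Finset.mem_insert_self A T')
    have hcoe : (⋃₀ (↑(insert A T') : Set (Set Ξ))) = A ∪ ⋃₀ (↑T' : Set (Set Ξ)) := by
      simp
    rw [hcoe, ← Set.union_assoc]
    have hre : B ∪ ⋃₀ (↑T' : Set (Set Ξ)) = (⋃₀ (↑T' : Set (Set Ξ))) ∪ B :=
      Set.union_comm _ _
    rw [hre] at ih'
    linarith [hso, ih', hBA']

/-- Key step of the main theorem: each outcome in a pairwise-exclusive
family does not interfere with the remainder region. -/
theorem outcome_remainder_noninterference {Ξ : Type*} [Fintype Ξ]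
    (meas : Set (Finset (Set Ξ)))
    (hpart : ∀ M ∈ meas, Setoid.IsPartition (↑M : Set (Set Ξ)))
    (P : Set Ξ → ℝ) (hP : IsProbFun meas P)
    (μ : Set Ξ → ℝ) (hμ : IsJQM meas P μ)
    (S₀ : Finset (Set Ξ)) (hout : ∀ A ∈ S₀, IsOutcome meas A)
    (hex : ∀ A ∈ S₀, ∀ B ∈ S₀, A ≠ B → Exclusive meas A B) :
    ∀ B ∈ S₀, μ B + μ ((⋃₀ (↑S₀ : Set (Set Ξ)))ᶜ)
      = μ (B ∪ (⋃₀ (↑S₀ : Set (Set Ξ)))ᶜ) := by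
  classical
  obtain ⟨hμ0, hμP, hSor⟩ := hμ
  obtain ⟨hP01, hPuniv, hPadd⟩ := hP
  intro B hB
  obtain ⟨M, hM, hBM⟩ := hout B hB
  -- μ of the empty set is 0
  have hempty : μ (∅ : Set Ξ) = 0 := by
    have hc : IsCoarse meas (∅ : Set Ξ) := ⟨M, hM, ∅, by simp, by simp⟩
    rw [hμP _ hc]
    have := hPadd M hM ∅ (by simp)
    simpa using this
  -- μ of a block equals P of the block
  have hblock : ∀ M' ∈ meas, ∀ A ∈ M', μ A = P A := by
    intro M' hM' A hA
    exact hμP _ ⟨M', hM', {A}, by simpa using hA, by simp⟩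
  -- μ of the whole space is 1
  have huniv : μ (Set.univ : Set Ξ) = 1 := by
    have hc : IsCoarse meas (Set.univ : Set Ξ) :=
      ⟨M, hM, M, le_refl _, ((hpart M hM).sUnion_eq_univ).symm⟩
    rw [hμP _ hc, hPuniv]
  -- μ of the complement of B is 1 - μ B
  have hcompl : μ Bᶜ = 1 - μ B := by
    have hpd := (hpart M hM).pairwiseDisjoint
    have hBc : (Bᶜ : Set Ξ) = ⋃₀ (↑(M.erase B) : Set (Set Ξ)) := by
      have huM : ⋃₀ (↑M : Set (Set Ξ)) = Set.univ := (hpart M hM).sUnion_eq_univ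
      ext x
      simp only [Set.mem_compl_iff, Set.mem_sUnion, Finset.coe_erase,
        Set.mem_diff, Set.mem_singleton_iff, Finset.mem_coe]
      constructor
      · intro hx
        have : x ∈ ⋃₀ (↑M : Set (Set Ξ)) := by rw [huM]; trivial
        obtain ⟨t, ht, hxt⟩ := this
        exact ⟨t, ⟨ht, fun h => hx (h ▸ hxt)⟩, hxt⟩
      · rintro ⟨t, ⟨ht, htB⟩, hxt⟩ hxB
        exact Set.disjoint_left.mp (hpd ht hBM htB) hxt hxB
    have hc : IsCoarse meas (Bᶜ : Set Ξ) := ⟨M, hM, M.erase B, Finset.erase_subset _ _, hBc⟩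
    have hsum1 : ∑ A ∈ M, P A = 1 := by
      rw [← hPadd M hM M (le_refl _), (hpart M hM).sUnion_eq_univ, hPuniv]
    have hsum2 : ∑ A ∈ M.erase B, P A = 1 - P B := by
      rw [Finset.sum_erase_eq_sub hBM, hsum1]
    rw [hμP _ hc, hBc, hPadd M hM _ (Finset.erase_subset _ _), hsum2,
      hblock M hM B hBM]
  -- pair additivity for exclusive outcomes
  have hpair : ∀ A ∈ S₀, A ≠ B → μ (B ∪ A) = μ B + μ A := by
    intro A hA hAB
    obtain ⟨hd, M', hM', hBM', hAM'⟩ := hex B hB A hA (fun h => hAB h.symm)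
    have hc : IsCoarse meas (B ∪ A) := by
      refine ⟨M', hM', {B, A}, ?_, by simp⟩
      intro x hx
      rcases Finset.mem_insert.mp hx with h | h
      · exact h ▸ hBM'
      · exact (Finset.mem_singleton.mp h) ▸ hAM'
    have hsum : P (⋃₀ (↑({B, A} : Finset (Set Ξ)) : Set (Set Ξ))) = P B + P A := by
      rw [hPadd M' hM' {B, A} (by
        intro x hx
        rcases Finset.mem_insert.mp hx with h | h
        · exact h ▸ hBM'
        · exact (Finset.mem_singleton.mp h) ▸ hAM')]
      exact Finset.sum_pair (fun h => hAB h.symm)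
    have hcoe : (⋃₀ (↑({B, A} : Finset (Set Ξ)) : Set (Set Ξ))) = B ∪ A := by simp
    rw [hμP _ hc, ← hcoe, hsum, hblock M' hM' B hBM', hblock M' hM' A hAM']
  -- additivity of μ on B and Y = union of the other outcomes
  set Y := ⋃₀ (↑(S₀.erase B) : Set (Set Ξ)) with hYdef
  have hdB : ∀ A ∈ S₀.erase B, Disjoint B A := fun A hA =>
    (hex B hB A (Finset.mem_of_mem_erase hA)
      (fun h => (Finset.ne_of_mem_erase hA) h.symm)).1
  have hBY : μ (B ∪ Y) = μ B + μ Y := by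
    refine sorkin_union_additive μ hSor hempty B (S₀.erase B) hdB ?_ ?_
    · intro A hA A' hA' hne
      exact (hex A (Finset.mem_of_mem_erase hA) A' (Finset.mem_of_mem_erase hA') hne).1
    · intro A hA
      exact hpair A (Finset.mem_of_mem_erase hA) (Finset.ne_of_mem_erase hA)
  -- X = B ∪ Y
  have hX : ⋃₀ (↑S₀ : Set (Set Ξ)) = B ∪ Y := by
    conv_lhs => rw [← Finset.insert_erase hB, Finset.coe_insert, Set.sUnion_insert]
  set R := (⋃₀ (↑S₀ : Set (Set Ξ)))ᶜ with hRdef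
  have hdBY : Disjoint B Y := Set.disjoint_sUnion_right.2 hdB
  have hBR : Disjoint B R := by
    rw [hRdef, Set.disjoint_compl_right_iff_subset, hX]
    exact Set.subset_union_left
  have hYR : Disjoint Y R := by
    rw [hRdef, Set.disjoint_compl_right_iff_subset, hX]
    exact Set.subset_union_right
  -- Y ∪ R = Bᶜ
  have hYRB : Y ∪ R = Bᶜ := by
    rw [hRdef, hX]
    ext x
    simp only [Set.mem_union, Set.mem_compl_iff]
    have hxd : x ∈ B → x ∉ Y := fun h1 h2 => Set.disjoint_left.mp hdBY h1 h2
    tauto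
  -- B ∪ Y ∪ R = univ
  have hBYR : B ∪ Y ∪ R = Set.univ := by
    rw [hRdef, hX, Set.union_compl_self]
  have hso := hSor B Y R hdBY hYR hBR
  rw [hYRB, hBYR] at hso
  have hRB : μ (R ∪ B) = μ (B ∪ R) := by rw [Set.union_comm]
  linarith [hso, hBY, hcompl, huniv, hRB]
end

section
/- Let Ξ be a finite set and μ : Set Ξ → ℝ satisfy the Sorkin sum rule with μ(∅) = 0. Then for any finite family A₁, …, A_n (n ≥ 2) of pairwise disjoint subsets of Ξ, μ(A₁ ∪ ⋯ ∪ A_n) = ∑_i μ(A_i) + ∑_{i < j} I₂(A_i, A_j), where I₂(A,B) := μ(A ∪ B) − μ(A) − μ(B). -/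
lemma pairsum_insert {α : Type*} [LinearOrder α] [DecidableEq α] (f : α → α → ℝ)
    (hf : ∀ i j, f i j = f j i) (s : Finset α) (b : α) (hb : b ∉ s) :
    ∑ i ∈ insert b s, ∑ j ∈ (insert b s).filter (fun j => i < j), f i j
      = (∑ i ∈ s, ∑ j ∈ s.filter (fun j => i < j), f i j) + ∑ j ∈ s, f b j := by
  classical
  rw [Finset.sum_insert hb]
  have h1 : (insert b s).filter (fun j => b < j) = s.filter (fun j => b < j) := by
    rw [Finset.filter_insert, if_neg (lt_irrefl b)]
  have h2 : ∀ i ∈ s, ∑ j ∈ (insert b s).filter (fun j => i < j), f i j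
      = (if i < b then f i b else 0) + ∑ j ∈ s.filter (fun j => i < j), f i j := by
    intro i hi
    rw [Finset.filter_insert]
    by_cases h : i < b
    · rw [if_pos h, if_pos h, Finset.sum_insert (by simp [hb])]
    · rw [if_neg h, if_neg h, zero_add]
  rw [h1, Finset.sum_congr rfl h2, Finset.sum_add_distrib]
  have h3 : ∑ j ∈ s, f b j
      = (∑ i ∈ s, if i < b then f i b else 0) + ∑ j ∈ s.filter (fun j => b < j), f b j := by
    rw [Finset.sum_filter, ← Finset.sum_add_distrib]
    refine Finset.sum_congr rfl fun j hj => ?_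
    have hjb : j ≠ b := fun h => hb (h ▸ hj)
    rcases lt_or_gt_of_ne hjb with h | h
    · rw [if_pos h, if_neg (asymm h), add_zero, hf]
    · rw [if_neg (asymm h), if_pos h, zero_add]
  rw [h3]; ring

/-- All interference in a quantum measure is accounted for by pairwise
interference terms. -/
theorem measure_eq_sum_plus_pairwise_interference {Ξ : Type*} [Fintype Ξ]
    (μ : Set Ξ → ℝ) (hμ : SorkinRule μ) (h0 : μ (∅ : Set Ξ) = 0)
    (n : ℕ) (hn : 2 ≤ n) (A : Fin n → Set Ξ)
    (hdisj : ∀ i j : Fin n, i ≠ j → Disjoint (A i) (A j)) :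
    μ (⋃ i, A i) = (∑ i, μ (A i)) +
      ∑ i : Fin n, ∑ j ∈ Finset.univ.filter (fun j => i < j),
        (μ (A i ∪ A j) - μ (A i) - μ (A j)) := by
  classical
  set U : Finset (Fin n) → Set Ξ := fun s => ⋃ i ∈ s, A i with hU
  have hdisjU : ∀ (s : Finset (Fin n)) (c : Fin n), c ∉ s → Disjoint (U s) (A c) := by
    intro s c hc
    simp only [hU, Set.disjoint_iUnion_left]
    intro i hi
    exact hdisj i c (fun h => hc (h ▸ hi))
  -- pair lemma
  have pair : ∀ (s : Finset (Fin n)) (c : Fin n), c ∉ s →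
      μ (U s ∪ A c) = μ (U s) + μ (A c)
        + ∑ i ∈ s, (μ (A i ∪ A c) - μ (A i) - μ (A c)) := by
    intro s
    induction s using Finset.induction_on with
    | empty =>
      intro c _
      simp [hU, h0]
    | @insert b t hb ih =>
      intro c hc
      have hcb : c ≠ b := fun h => hc (h ▸ Finset.mem_insert_self b t)
      have hct : c ∉ t := fun h => hc (Finset.mem_insert_of_mem h)
      have hUins : U (insert b t) = A b ∪ U t := by
        simp [hU, Set.biUnion_insert]
      have hS := hμ (U t) (A b) (A c) (hdisjU t b hb)
        (hdisj b c (Ne.symm hcb)) (hdisjU t c hct)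
      have hbc : U t ∪ A b ∪ A c = U (insert b t) ∪ A c := by
        rw [hUins]; ac_rfl
      have hca : A c ∪ U t = U t ∪ A c := Set.union_comm _ _
      have hba : U t ∪ A b = U (insert b t) := by rw [hUins]; exact Set.union_comm _ _
      rw [hbc, hca, hba, ih c hct] at hS
      rw [Finset.sum_insert hb]
      linarith
  -- main lemma
  have main : ∀ s : Finset (Fin n),
      μ (U s) = (∑ i ∈ s, μ (A i)) +
        ∑ i ∈ s, ∑ j ∈ s.filter (fun j => i < j), (μ (A i ∪ A j) - μ (A i) - μ (A j)) := by
    intro s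
    induction s using Finset.induction_on with
    | empty => simp [hU, h0]
    | @insert b t hb ih =>
      have hUins : U (insert b t) = U t ∪ A b := by
        simp [hU, Set.biUnion_insert]; exact Set.union_comm _ _
      have hps := pairsum_insert (fun i j => μ (A i ∪ A j) - μ (A i) - μ (A j))
        (fun i j => by
          show μ (A i ∪ A j) - μ (A i) - μ (A j) = μ (A j ∪ A i) - μ (A j) - μ (A i)
          rw [Set.union_comm]; ring) t b hb
      have hps' : ∑ i ∈ insert b t, ∑ j ∈ Finset.filter (fun j => i < j) (insert b t),
            (μ (A i ∪ A j) - μ (A i) - μ (A j))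
          = (∑ i ∈ t, ∑ j ∈ Finset.filter (fun j => i < j) t,
              (μ (A i ∪ A j) - μ (A i) - μ (A j)))
            + ∑ j ∈ t, (μ (A b ∪ A j) - μ (A b) - μ (A j)) := hps
      have hsym : ∑ i ∈ t, (μ (A i ∪ A b) - μ (A i) - μ (A b))
          = ∑ j ∈ t, (μ (A b ∪ A j) - μ (A b) - μ (A j)) :=
        Finset.sum_congr rfl (fun i _ => by rw [Set.union_comm]; ring)
      rw [hUins, pair t b hb, ih, hps', Finset.sum_insert hb, hsym]
      ring
  have huniv : (⋃ i, A i) = U Finset.univ := by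
    simp [hU]
  rw [huniv, main Finset.univ]
end

section
/- Let Ξ be a finite set and μ : Set Ξ → ℝ a function satisfying the Sorkin sum rule. Then μ is determined by its values on sets of cardinality at most 2: for any X ⊆ Ξ with |X| ≥ 1, writing X = {x₁, …, x_n}, μ(X) = ∑_{i<j} μ({x_i, x_j}) − (n − 2) ∑_i μ({x_i}). -/
private def Tsum {Ξ : Type*} (μ : Set Ξ → ℝ) (n : ℕ) (x : Fin n → Ξ) : ℝ :=
  ∑ i : Fin n, ∑ j ∈ Finset.univ.filter (fun j => i < j), μ {x i, x j}

private lemma Tsum_succ {Ξ : Type*} (μ : Set Ξ → ℝ) (n : ℕ) (x : Fin (n+1) → Ξ) :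
    Tsum μ (n+1) x = Tsum μ n (x ∘ Fin.castSucc)
      + ∑ i : Fin n, μ {x i.castSucc, x (Fin.last n)} := by
  unfold Tsum
  simp only [Finset.sum_filter, Function.comp]
  rw [Fin.sum_univ_castSucc]
  have h1 : ∀ i : Fin n,
      (∑ j : Fin (n+1), if i.castSucc < j then μ {x i.castSucc, x j} else 0)
      = (∑ j : Fin n, if i < j then μ {x i.castSucc, x j.castSucc} else 0)
        + μ {x i.castSucc, x (Fin.last n)} := by
    intro i
    rw [Fin.sum_univ_castSucc]
    simp [Fin.castSucc_lt_castSucc_iff, Fin.castSucc_lt_last]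
  have h2 : (∑ j : Fin (n+1), if Fin.last n < j then μ {x (Fin.last n), x j} else 0) = 0 := by
    apply Finset.sum_eq_zero
    intro j _
    simp [Fin.not_lt.mpr (Fin.le_last j)]
  simp only [h1]
  rw [h2, Finset.sum_add_distrib]
  ring

private lemma range_fin_succ {α : Type*} {n : ℕ} (x : Fin (n+1) → α) :
    Set.range x = Set.range (x ∘ Fin.castSucc) ∪ {x (Fin.last n)} := by
  ext b
  simp only [Set.mem_union, Set.mem_range, Set.mem_singleton_iff, Function.comp]
  constructor
  · rintro ⟨i, rfl⟩
    induction i using Fin.lastCases with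
    | last => exact Or.inr rfl
    | cast j => exact Or.inl ⟨j, rfl⟩
  · rintro (⟨i, rfl⟩ | rfl) <;> exact ⟨_, rfl⟩

private lemma key {Ξ : Type*} (μ : Set Ξ → ℝ) (hμ : SorkinRule μ) :
    ∀ n : ℕ, 1 ≤ n → ∀ x : Fin n → Ξ, Function.Injective x →
    μ (Set.range x) = Tsum μ n x - ((n : ℝ) - 2) * ∑ i : Fin n, μ {x i} := by
  intro n
  induction n using Nat.strong_induction_on with
  | _ n IH =>
  intro hn x hinj
  match n, hn with
  | 1, _ =>
    have hr : Set.range x = {x 0} := by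
      ext c
      simp only [Set.mem_range, Set.mem_singleton_iff]
      constructor
      · rintro ⟨i, rfl⟩; rw [Fin.fin_one_eq_zero i]
      · rintro rfl; exact ⟨0, rfl⟩
    have hT : Tsum μ 1 x = 0 := by
      unfold Tsum
      apply Finset.sum_eq_zero
      intro i _
      apply Finset.sum_eq_zero
      intro j hj
      simp only [Finset.mem_filter] at hj
      have : i = j := Subsingleton.elim i j
      exact absurd hj.2 (this ▸ lt_irrefl i)
    rw [hr, hT, Fin.sum_univ_one]
    norm_num
  | 2, _ =>
    have hr : Set.range x = {x 0, x 1} := by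
      ext b
      simp only [Set.mem_range, Set.mem_insert_iff, Set.mem_singleton_iff]
      constructor
      · rintro ⟨i, rfl⟩
        fin_cases i
        · exact Or.inl rfl
        · exact Or.inr rfl
      · rintro (rfl | rfl); exacts [⟨0, rfl⟩, ⟨1, rfl⟩]
    have hT : Tsum μ 2 x = μ {x 0, x 1} := by
      unfold Tsum
      rw [Fin.sum_univ_two]
      have e0 : (Finset.univ.filter (fun j => (0 : Fin 2) < j)) = {1} := by decide
      have e1 : (Finset.univ.filter (fun j => (1 : Fin 2) < j)) = ∅ := by decide
      rw [e0, e1]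
      simp
    rw [hr, hT]
    norm_num
  | (m+3), _ =>
    set a : Ξ := x (Fin.last (m+2)) with ha
    set y : Fin (m+2) → Ξ := x ∘ Fin.castSucc with hy
    set b : Ξ := y (Fin.last (m+1)) with hb
    set z : Fin (m+1) → Ξ := y ∘ Fin.castSucc with hz
    have hyinj : Function.Injective y := hinj.comp (Fin.castSucc_injective _)
    have hzinj : Function.Injective z := hyinj.comp (Fin.castSucc_injective _)
    have hbz : b ∉ Set.range z := by
      rintro ⟨i, hi⟩
      have := hyinj hi
      exact absurd this (Fin.castSucc_lt_last i).ne
    have haz : a ∉ Set.range z := by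
      rintro ⟨i, hi⟩
      have : x (i.castSucc.castSucc) = x (Fin.last (m+2)) := hi
      have := hinj this
      exact absurd this (Fin.castSucc_lt_last _).ne
    have hab : a ≠ b := by
      intro h
      have : x (Fin.last (m+2)) = x ((Fin.last (m+1)).castSucc) := h
      have := hinj this
      exact absurd this.symm (Fin.castSucc_lt_last _).ne
    -- g : Fin (m+2) → Ξ, first m+1 values z, last value a
    set g : Fin (m+2) → Ξ := Fin.snoc z a with hg
    have hginj : Function.Injective g := by
      intro i j hij
      induction i using Fin.lastCases with
      | last =>
        induction j using Fin.lastCases with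
        | last => rfl
        | cast j' =>
          rw [hg] at hij
          simp only [Fin.snoc_last, Fin.snoc_castSucc] at hij
          exact absurd ⟨j', hij.symm⟩ haz
      | cast i' =>
        induction j using Fin.lastCases with
        | last =>
          rw [hg] at hij
          simp only [Fin.snoc_last, Fin.snoc_castSucc] at hij
          exact absurd ⟨i', hij⟩ haz
        | cast j' =>
          rw [hg] at hij
          simp only [Fin.snoc_castSucc] at hij
          rw [hzinj hij]
    have hgcast : g ∘ Fin.castSucc = z := by
      funext i; simp [hg, Fin.snoc_castSucc]
    have hglast : g (Fin.last (m+1)) = a := by simp [hg]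
    -- ranges
    have hrx : Set.range x = (Set.range z ∪ {b}) ∪ {a} := by
      rw [range_fin_succ x, ← hy, ← ha, range_fin_succ y, ← hz, ← hb]
    have hry : Set.range y = Set.range z ∪ {b} := by
      rw [range_fin_succ y, ← hz, ← hb]
    have hrg : Set.range g = Set.range z ∪ {a} := by
      rw [range_fin_succ g, hgcast, hglast]
    -- disjointness
    have d1 : Disjoint (Set.range z) ({b} : Set Ξ) := by
      rw [Set.disjoint_singleton_right]; exact hbz
    have d2 : Disjoint ({b} : Set Ξ) ({a} : Set Ξ) := by
      rw [Set.disjoint_singleton_right]; simpa using hab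
    have d3 : Disjoint (Set.range z) ({a} : Set Ξ) := by
      rw [Set.disjoint_singleton_right]; exact haz
    have sorkin := hμ (Set.range z) {b} {a} d1 d2 d3
    -- IH applications
    have IHy := IH (m+2) (by omega) (by omega) y hyinj
    have IHz := IH (m+1) (by omega) (by omega) z hzinj
    have IHg := IH (m+2) (by omega) (by omega) g hginj
    -- sum identities
    have Tx : Tsum μ (m+3) x = Tsum μ (m+2) y + (∑ i : Fin (m+1), μ {z i, a} + μ {b, a}) := by
      rw [Tsum_succ, ← hy, ← ha]
      congr 1
      rw [Fin.sum_univ_castSucc]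
      rfl
    have Ty : Tsum μ (m+2) y = Tsum μ (m+1) z + ∑ i : Fin (m+1), μ {z i, b} := by
      rw [Tsum_succ, ← hz, ← hb]; rfl
    have Tg : Tsum μ (m+2) g = Tsum μ (m+1) z + ∑ i : Fin (m+1), μ {z i, a} := by
      rw [Tsum_succ, hgcast, hglast]
      have hgc : ∀ i : Fin (m+1), g i.castSucc = z i := fun i => by
        simp [hg]
      simp only [hgc]
    have Sx : (∑ i : Fin (m+3), μ {x i}) = (∑ i : Fin (m+1), μ {z i}) + μ {b} + μ {a} := by
      rw [Fin.sum_univ_castSucc, Fin.sum_univ_castSucc]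
      rfl
    have Sy : (∑ i : Fin (m+2), μ {y i}) = (∑ i : Fin (m+1), μ {z i}) + μ {b} := by
      rw [Fin.sum_univ_castSucc]; rfl
    have Sg : (∑ i : Fin (m+2), μ {g i}) = (∑ i : Fin (m+1), μ {z i}) + μ {a} := by
      rw [Fin.sum_univ_castSucc, hglast]
      have hgc : ∀ i : Fin (m+1), g i.castSucc = z i := fun i => by
        simp [hg]
      simp only [hgc]
    -- rewrite sets in sorkin
    rw [← hry] at sorkin
    have hbc : ({b} : Set Ξ) ∪ {a} = {b, a} := by
      rw [Set.singleton_union]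
    have hca : ({a} : Set Ξ) ∪ Set.range z = Set.range g := by
      rw [hrg, Set.union_comm]
    rw [hbc, hca] at sorkin
    have hrx' : μ (Set.range x) = μ (Set.range y ∪ {a}) := by
      rw [hrx, hry]
    rw [← hry] at hrx
    rw [hrx]
    rw [IHy, IHz, IHg] at sorkin
    rw [Tx, Ty, Sx]
    rw [Ty, Sy, Tg, Sg] at sorkin
    push_cast at sorkin ⊢
    linarith [sorkin]

/-- A quantum measure is determined by its values on singletons and
doubletons. -/
theorem measure_determined_by_pairs {Ξ : Type*} [Fintype Ξ]
    (μ : Set Ξ → ℝ) (hμ : SorkinRule μ) (n : ℕ) (hn : 1 ≤ n)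
    (x : Fin n → Ξ) (hinj : Function.Injective x) :
    μ (Set.range x) =
      (∑ i : Fin n, ∑ j ∈ Finset.univ.filter (fun j => i < j), μ {x i, x j})
        - ((n : ℝ) - 2) * ∑ i : Fin n, μ {x i} := key μ hμ n hn x hinj
end

section
/- Let Ξ be a finite set and μ : Set Ξ → ℝ satisfy the Sorkin sum rule with μ(∅) = 0. Define I₂(A,B) = μ(A∪B) − μ(A) − μ(B) for disjoint A, B. If I₂({x},{y}) = 0 for all distinct x, y ∈ Ξ, then μ is additive: μ(A ∪ B) = μ(A) + μ(B) for all disjoint A, B ⊆ Ξ. -/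
/-!
The interference term `I(A, B) = μ(A ∪ B) - μ A - μ B` is symmetric, and the Sorkin sum rule says
precisely that it is additive in each argument over disjoint sets. On a finite space `I` is
therefore determined by its values on pairs of points, which vanish by hypothesis.
-/

open Set

namespace SorkinRule

variable {Ξ : Type*}

def interference (μ : Set Ξ → ℝ) (A B : Set Ξ) : ℝ := μ (A ∪ B) - μ A - μ B

theorem interference_comm (μ : Set Ξ → ℝ) (A B : Set Ξ) :
    interference μ A B = interference μ B A := by
  simp only [interference, union_comm A B]
  ring

variable {μ : Set Ξ → ℝ}

theorem map_empty (hμ : SorkinRule μ) : μ ∅ = 0 := by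
  simpa using hμ ∅ ∅ ∅ (disjoint_empty _) (disjoint_empty _) (disjoint_empty _)

theorem interference_union_left (hμ : SorkinRule μ) {A B C : Set Ξ} (hAB : Disjoint A B)
    (hBC : Disjoint B C) (hAC : Disjoint A C) :
    interference μ (A ∪ B) C = interference μ A C + interference μ B C := by
  have h := hμ A B C hAB hBC hAC
  rw [union_comm C A] at h
  simp only [interference]
  linarith

theorem interference_eq_zero_of_forall_singleton (hμ : SorkinRule μ) {A C : Set Ξ}
    (hA : A.Finite) (hAC : Disjoint A C) (h : ∀ a ∈ A, interference μ {a} C = 0) :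
    interference μ A C = 0 := by
  induction A, hA using Set.Finite.induction_on with
  | empty => simp [interference, hμ.map_empty]
  | @insert a s ha _ ih =>
    rw [insert_eq] at hAC ⊢
    rw [hμ.interference_union_left (disjoint_singleton_left.2 ha)
      (hAC.mono_left subset_union_right) (hAC.mono_left subset_union_left),
      h a (mem_insert a s), ih (hAC.mono_left subset_union_right)
      fun x hx => h x (mem_insert_of_mem a hx), add_zero]

end SorkinRule

theorem additive_of_no_elementary_interference_general {Ξ : Type*} [Fintype Ξ]
    (μ : Set Ξ → ℝ) (hμ : SorkinRule μ)
    (hI : ∀ x y : Ξ, x ≠ y → μ ({x} ∪ {y} : Set Ξ) - μ {x} - μ {y} = 0) :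
    ∀ A B : Set Ξ, Disjoint A B → μ (A ∪ B) = μ A + μ B := by
  have h_point (A : Set Ξ) (y : Ξ) (hy : y ∉ A) : SorkinRule.interference μ A {y} = 0 :=
    hμ.interference_eq_zero_of_forall_singleton A.toFinite (disjoint_singleton_right.2 hy)
      fun a ha => hI a y (ne_of_mem_of_not_mem ha hy)
  intro A B hAB
  have h : SorkinRule.interference μ B A = 0 :=
    hμ.interference_eq_zero_of_forall_singleton B.toFinite hAB.symm fun b hb => by
      rw [SorkinRule.interference_comm]
      exact h_point A b (disjoint_right.1 hAB hb)
  rw [SorkinRule.interference_comm, SorkinRule.interference] at h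
  linarith

/-- If no two elementary events interfere, a quantum measure is classical
(finitely additive). -/
theorem additive_of_no_elementary_interference {Ξ : Type*} [Fintype Ξ]
    (μ : Set Ξ → ℝ) (hμ : SorkinRule μ) (h0 : μ (∅ : Set Ξ) = 0)
    (hI : ∀ x y : Ξ, x ≠ y → μ ({x} ∪ {y} : Set Ξ) - μ {x} - μ {y} = 0) :
    ∀ A B : Set Ξ, Disjoint A B → μ (A ∪ B) = μ A + μ B :=
  additive_of_no_elementary_interference_general μ hμ hI
end

section
/- Let S = (Ξ, 𝓜) be a partition scenario in which every pair of fine-grained outcomes of distinct measurements that are disjoint also appear together as blocks of some common measurement (so disjointness implies exclusivity). If a probability function P on S admits a joint quantum measure, then for every family S₀ of pairwise disjoint fine-grained outcomes, ∑_{A ∈ S₀} P(A) ≤ 1. -/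
/-- In a scenario where disjointness of outcomes implies exclusivity, a
probability function admitting a joint quantum measure satisfies the
exclusivity bound for every pairwise disjoint family of outcomes. -/
theorem jqm_bound_for_disjoint_families {Ξ : Type*} [Fintype Ξ]
    (meas : Set (Finset (Set Ξ)))
    (hpart : ∀ M ∈ meas, Setoid.IsPartition (↑M : Set (Set Ξ)))
    (hde : ∀ A B : Set Ξ, IsOutcome meas A → IsOutcome meas B →
      Disjoint A B → Exclusive meas A B)
    (P : Set Ξ → ℝ) (hP : IsProbFun meas P)
    (hq : ∃ μ : Set Ξ → ℝ, IsJQM meas P μ)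
    (S₀ : Finset (Set Ξ)) (hout : ∀ A ∈ S₀, IsOutcome meas A)
    (hdisj : ∀ A ∈ S₀, ∀ B ∈ S₀, A ≠ B → Disjoint A B) :
    ∑ A ∈ S₀, P A ≤ 1 := by
  classical
  obtain ⟨μ, hμ0, hμP, hS⟩ := hq
  rcases S₀.eq_empty_or_nonempty with rfl | ⟨A₀, hA₀⟩
  · simp
  obtain ⟨M₀, hM₀, -⟩ := hout A₀ hA₀
  have hPsum := hP.2.2
  -- μ on coarse sets built from a Q
  have hμ_coarse : ∀ M ∈ meas, ∀ Q : Finset (Set Ξ), Q ⊆ M →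
      μ (⋃₀ (↑Q : Set (Set Ξ))) = ∑ A ∈ Q, P A := by
    intro M hM Q hQ
    rw [hμP _ ⟨M, hM, Q, hQ, rfl⟩, hPsum M hM Q hQ]
  have hμ_empty : μ ∅ = 0 := by
    have h := hμ_coarse M₀ hM₀ ∅ (Finset.empty_subset _)
    simpa using h
  have hμ_out : ∀ A, IsOutcome meas A → μ A = P A := by
    rintro A ⟨M, hM, hAM⟩
    have h := hμ_coarse M hM {A} (by simpa using hAM)
    simpa using h
  -- every measurement covers the space
  have hcover : ∀ M ∈ meas, ⋃₀ (↑M : Set (Set Ξ)) = Set.univ := by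
    intro M hM
    ext x
    simp only [Set.mem_univ, iff_true, Set.mem_sUnion]
    obtain ⟨b, ⟨hb, hxb⟩, -⟩ := (hpart M hM).2 x
    exact ⟨b, hb, hxb⟩
  have hμuniv : μ Set.univ = 1 := by
    have h := hμP Set.univ ⟨M₀, hM₀, M₀, Finset.Subset.refl _, (hcover M₀ hM₀).symm⟩
    rw [h, hP.2.1]
  -- complements of outcomes
  have hcompl : ∀ A, IsOutcome meas A → μ Aᶜ = 1 - P A := by
    rintro A ⟨M, hM, hAM⟩
    have herase : ⋃₀ (↑(M.erase A) : Set (Set Ξ)) = Aᶜ := by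
      ext x
      simp only [Set.mem_sUnion, Finset.coe_erase, Set.mem_diff, Set.mem_compl_iff,
        Finset.mem_coe, Set.mem_singleton_iff]
      constructor
      · rintro ⟨b, ⟨hbM, hbA⟩, hxb⟩ hxA
        obtain ⟨c, -, huniq⟩ := (hpart M hM).2 x
        exact hbA ((huniq b ⟨hbM, hxb⟩).trans (huniq A ⟨hAM, hxA⟩).symm)
      · intro hxA
        obtain ⟨b, ⟨hbM, hxb⟩, -⟩ := (hpart M hM).2 x
        exact ⟨b, ⟨hbM, fun hba => hxA (hba ▸ hxb)⟩, hxb⟩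
    have h1 : μ Aᶜ = ∑ B ∈ M.erase A, P B := by
      rw [← herase]; exact hμ_coarse M hM _ (Finset.erase_subset _ _)
    have h2 : ∑ B ∈ M, P B = 1 := by
      rw [← hPsum M hM M (Finset.Subset.refl _), hcover M hM, hP.2.1]
    rw [h1, Finset.sum_erase_eq_sub hAM, h2]
  -- additivity on exclusive pairs
  have hadd2 : ∀ A B : Set Ξ, IsOutcome meas A → IsOutcome meas B → A ≠ B →
      Disjoint A B → μ (A ∪ B) = μ A + μ B := by
    intro A B hA hB hne hd
    obtain ⟨-, M, hM, hAM, hBM⟩ := hde A B hA hB hd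
    have hQ : ({A, B} : Finset (Set Ξ)) ⊆ M := by
      intro x hx
      rcases Finset.mem_insert.mp hx with rfl | hx
      · exact hAM
      · exact (Finset.mem_singleton.mp hx) ▸ hBM
    have h := hμ_coarse M hM {A, B} hQ
    rw [Finset.coe_insert, Finset.coe_singleton, Set.sUnion_insert, Set.sUnion_singleton,
      Finset.sum_pair hne] at h
    rw [h, hμ_out A hA, hμ_out B hB]
  -- biadditivity of interference from Sorkin
  have hI : ∀ A B C : Set Ξ, Disjoint A B → Disjoint B C → Disjoint A C →
      μ (A ∪ B ∪ C) - μ (A ∪ B) - μ C =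
        (μ (A ∪ C) - μ A - μ C) + (μ (B ∪ C) - μ B - μ C) := by
    intro A B C h1 h2 h3
    have h := hS A B C h1 h2 h3
    rw [Set.union_comm C A] at h
    linarith
  -- interference of a disjoint family with a common set is the sum of interferences
  have hIfam : ∀ (T : Finset (Set Ξ)) (C : Set Ξ),
      (∀ A ∈ T, ∀ B ∈ T, A ≠ B → Disjoint A B) → (∀ A ∈ T, Disjoint A C) →
      μ (⋃₀ ↑T ∪ C) - μ (⋃₀ (↑T : Set (Set Ξ))) - μ C =
        ∑ A ∈ T, (μ (A ∪ C) - μ A - μ C) := by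
    intro T
    induction T using Finset.induction_on with
    | empty => intro C _ _; simp [hμ_empty]
    | @insert A T hA ih =>
      intro C hpd hdc
      have hUT : (⋃₀ ↑(insert A T) : Set Ξ) = A ∪ ⋃₀ ↑T := by
        rw [Finset.coe_insert, Set.sUnion_insert]
      have hdAT : Disjoint A (⋃₀ (↑T : Set (Set Ξ))) := by
        rw [Set.disjoint_sUnion_right]
        intro B hB
        exact hpd A (Finset.mem_insert_self _ _) B
          (Finset.mem_insert_of_mem hB) (by rintro rfl; exact hA hB)
      have hdTC : Disjoint (⋃₀ (↑T : Set (Set Ξ))) C := by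
        rw [Set.disjoint_sUnion_left]
        intro B hB
        exact hdc B (Finset.mem_insert_of_mem hB)
      have hAC : Disjoint A C := hdc A (Finset.mem_insert_self _ _)
      have h3 := hI A (⋃₀ ↑T) C hdAT hdTC hAC
      have hih := ih C (fun x hx y hy => hpd x (Finset.mem_insert_of_mem hx) y
        (Finset.mem_insert_of_mem hy)) (fun x hx => hdc x (Finset.mem_insert_of_mem hx))
      rw [hUT, Finset.sum_insert hA]
      linarith
  -- additivity of μ on subfamilies of S₀
  have hWadd : ∀ T : Finset (Set Ξ), T ⊆ S₀ → μ (⋃₀ (↑T : Set (Set Ξ))) = ∑ A ∈ T, μ A := by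
    intro T
    induction T using Finset.induction_on with
    | empty => intro _; simp [hμ_empty]
    | @insert A T hA ih =>
      intro hsub
      have hAS : A ∈ S₀ := hsub (Finset.mem_insert_self _ _)
      have hTS : T ⊆ S₀ := fun x hx => hsub (Finset.mem_insert_of_mem hx)
      have key := hIfam T A
        (fun x hx y hy => hdisj x (hTS hx) y (hTS hy))
        (fun x hx => hdisj x (hTS hx) A hAS (by rintro rfl; exact hA hx))
      have hz : ∀ B ∈ T, μ (B ∪ A) - μ B - μ A = 0 := by
        intro B hB
        have hne : B ≠ A := by rintro rfl; exact hA hB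
        have := hadd2 B A (hout B (hTS hB)) (hout A hAS) hne (hdisj B (hTS hB) A hAS hne)
        linarith
      rw [Finset.sum_eq_zero hz] at key
      have hUT : (⋃₀ ↑(insert A T) : Set Ξ) = ⋃₀ ↑T ∪ A := by
        rw [Finset.coe_insert, Set.sUnion_insert, Set.union_comm]
      rw [hUT, Finset.sum_insert hA]
      linarith [ih hTS]
  set W : Set Ξ := ⋃₀ (↑S₀ : Set (Set Ξ)) with hW
  have hμW : μ W = ∑ A ∈ S₀, μ A := hWadd S₀ (Finset.Subset.refl _)
  have hdWc : ∀ A ∈ S₀, Disjoint A Wᶜ := by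
    intro A hA
    exact Set.disjoint_left.mpr fun x hx hxc => hxc ⟨A, hA, hx⟩
  -- interference of each A ∈ S₀ with Wᶜ vanishes
  have hIzero : ∀ A ∈ S₀, μ (A ∪ Wᶜ) - μ A - μ Wᶜ = 0 := by
    intro A hA
    set B : Set Ξ := ⋃₀ (↑(S₀.erase A) : Set (Set Ξ)) with hB
    have hAB : A ∪ B = W := by
      rw [hB, ← Set.sUnion_insert, ← Finset.coe_insert, Finset.insert_erase hA]
    have hdAB : Disjoint A B := by
      rw [hB, Set.disjoint_sUnion_right]
      intro b hb
      have hb' := Finset.mem_erase.mp hb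
      exact hdisj A hA b hb'.2 (Ne.symm hb'.1)
    have hdBC : Disjoint B Wᶜ := by
      rw [hB, Set.disjoint_sUnion_left]
      intro b hb
      exact hdWc b (Finset.mem_of_mem_erase hb)
    have hdAC : Disjoint A Wᶜ := hdWc A hA
    have hBC : B ∪ Wᶜ = Aᶜ := by
      ext x
      constructor
      · rintro (hxB | hxW)
        · exact fun hxA => Set.disjoint_right.mp hdAB hxB hxA
        · exact fun hxA => hxW ⟨A, hA, hxA⟩
      · intro hxA
        by_cases hxW' : x ∈ W
        · obtain ⟨b, hb, hxb⟩ := hxW'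
          exact Or.inl ⟨b, Finset.mem_erase.mpr ⟨by rintro rfl; exact hxA hxb, hb⟩, hxb⟩
        · exact Or.inr hxW'
    have hABC : A ∪ B ∪ Wᶜ = Set.univ := by rw [hAB, Set.union_compl_self]
    have hs := hS A B Wᶜ hdAB hdBC hdAC
    rw [hABC, hμuniv, hAB] at hs
    have hμB : μ B = ∑ x ∈ S₀.erase A, μ x := hWadd _ (Finset.erase_subset _ _)
    have hμBe : μ B = (∑ x ∈ S₀, μ x) - μ A := by
      rw [hμB, Finset.sum_erase_eq_sub hA]
    have hμBC : μ (B ∪ Wᶜ) = 1 - μ A := by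
      rw [hBC, hcompl A (hout A hA), hμ_out A (hout A hA)]
    rw [Set.union_comm Wᶜ A] at hs
    linarith [hμW]
  have hfin := hIfam S₀ Wᶜ hdisj hdWc
  rw [Finset.sum_eq_zero hIzero] at hfin
  have hWu : W ∪ Wᶜ = Set.univ := Set.union_compl_self _
  rw [← hW, hWu, hμuniv, hμW] at hfin
  have hPμ : ∑ A ∈ S₀, P A = ∑ A ∈ S₀, μ A :=
    Finset.sum_congr rfl fun A hA => (hμ_out A (hout A hA)).symm
  have := hμ0 Wᶜ
  linarith
end
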